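/- arXiv:1206.6082 — 3 statements merged into one kernel-verified Lean document; each statement's English description precedes it below -/
import Mathlib

section
/- Let d ≥ 1, p > 4/d, and a > 0. Suppose w, v : [0,∞) → [0,∞) are continuous with w differentiable and satisfy w'(t) + 2a v(t) ≤ (4/d) v(t)^{4/(pd)} w(t)^{1 - 4/(pd)} for all t ≥ 0. Then w(t) ≤ w(0) · exp(t · a^{-4/(pd-4)} · C) for some constant C = C(p,d) > 0. -/
open MeasureTheory Real Filter Set

/-!
The damping term is strong enough to swallow the focusing term. Since `p d > 4`, the exponent
`θ = 4 / (p d)` lies in `(0, 1)`, and the weighted Young inequality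
`x ^ θ * y ^ (1 - θ) ≤ θ c x + (1 - θ) c ^ (-θ / (1 - θ)) y`, with `c` chosen so that the
`v`-coefficient is exactly the damping `2 a`, leaves `w' ≤ K w` with
`K = C a ^ (-θ / (1 - θ)) = C a ^ (-4 / (p d - 4))`. Grönwall's inequality concludes.
-/

namespace Real

theorem rpow_mul_rpow_one_sub_le {θ c x y : ℝ} (hθ0 : 0 ≤ θ) (hθ1 : θ < 1) (hc : 0 < c)
    (hx : 0 ≤ x) (hy : 0 ≤ y) :
    x ^ θ * y ^ (1 - θ) ≤ θ * c * x + (1 - θ) * c ^ (-(θ / (1 - θ))) * y := by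
  have h1θ : 0 < 1 - θ := by linarith
  set m := c ^ (-(θ / (1 - θ)))
  have hm : m ^ (1 - θ) = c ^ (-θ) := by
    rw [← rpow_mul hc.le]
    congr 1
    field_simp
  have hscale : x ^ θ * y ^ (1 - θ) = (c * x) ^ θ * (m * y) ^ (1 - θ) := by
    rw [mul_rpow hc.le hx, mul_rpow (by positivity) hy, hm]
    calc x ^ θ * y ^ (1 - θ) = c ^ θ * c ^ (-θ) * (x ^ θ * y ^ (1 - θ)) := by
          rw [← rpow_add hc, add_neg_cancel, rpow_zero, one_mul]
      _ = c ^ θ * x ^ θ * (c ^ (-θ) * y ^ (1 - θ)) := by ring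
  calc x ^ θ * y ^ (1 - θ) = (c * x) ^ θ * (m * y) ^ (1 - θ) := hscale
    _ ≤ θ * (c * x) + (1 - θ) * (m * y) :=
        geom_mean_le_arith_mean2_weighted hθ0 h1θ.le (by positivity) (by positivity) (by ring)
    _ = θ * c * x + (1 - θ) * m * y := by ring

end Real

theorem mul_rpow_mul_rpow_one_sub_le_two_mul {k θ a x y : ℝ} (hk : 0 < k) (hθ0 : 0 < θ)
    (hθ1 : θ < 1) (ha : 0 < a) (hx : 0 ≤ x) (hy : 0 ≤ y) :
    k * x ^ θ * y ^ (1 - θ) ≤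
      2 * a * x + a ^ (-(θ / (1 - θ))) * (k * (1 - θ) * (2 / (k * θ)) ^ (-(θ / (1 - θ)))) * y := by
  have hyoung := Real.rpow_mul_rpow_one_sub_le hθ0.le hθ1
    (by positivity : 0 < 2 / (k * θ) * a) hx hy
  rw [mul_rpow (by positivity) ha.le] at hyoung
  calc k * x ^ θ * y ^ (1 - θ) = k * (x ^ θ * y ^ (1 - θ)) := mul_assoc _ _ _
    _ ≤ k * (θ * (2 / (k * θ) * a) * x
          + (1 - θ) * ((2 / (k * θ)) ^ (-(θ / (1 - θ))) * a ^ (-(θ / (1 - θ)))) * y) :=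
        mul_le_mul_of_nonneg_left hyoung hk.le
    _ = _ := by field_simp

theorem le_mul_exp_of_deriv_le_mul {w : ℝ → ℝ} {K t₀ t : ℝ}
    (hw : ∀ s, t₀ ≤ s → DifferentiableAt ℝ w s) (hK : ∀ s, t₀ ≤ s → deriv w s ≤ K * w s)
    (ht : t₀ ≤ t) : w t ≤ w t₀ * exp (K * (t - t₀)) := by
  have := le_gronwallBound_of_liminf_deriv_right_le (f' := deriv w) (δ := w t₀) (ε := 0)
    (fun s hs ↦ (hw s hs.1).continuousAt.continuousWithinAt)
    (fun s hs _ hr ↦ (hw s hs.1).hasDerivAt.hasDerivWithinAt.liminf_right_slope_le hr)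
    le_rfl (fun s hs ↦ by rw [add_zero]; exact hK s hs.1) t ⟨ht, le_rfl⟩
  rwa [gronwallBound_ε0] at this

/-- Differential inequality argument for global existence for the damped NLS
when the damping power exceeds the focusing power. -/
theorem stmt0 (d : ℕ) (hd : 1 ≤ d) (p : ℝ) (hp : 4 / (d : ℝ) < p) :
    ∃ C : ℝ, 0 < C ∧ ∀ a : ℝ, 0 < a → ∀ w v : ℝ → ℝ,
      ContinuousOn w (Set.Ici 0) → ContinuousOn v (Set.Ici 0) →
      (∀ t, 0 ≤ t → 0 ≤ w t) → (∀ t, 0 ≤ t → 0 ≤ v t) →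
      (∀ t, 0 ≤ t → DifferentiableAt ℝ w t) →
      (∀ t, 0 ≤ t → deriv w t + 2 * a * v t ≤
        (4 / (d : ℝ)) * (v t) ^ (4 / (p * (d : ℝ))) * (w t) ^ (1 - 4 / (p * (d : ℝ)))) →
      ∀ t, 0 ≤ t → w t ≤ w 0 * Real.exp (t * a ^ (-(4 / (p * (d : ℝ) - 4))) * C) := by
  have hd0 : (0 : ℝ) < d := by exact_mod_cast hd
  have hpd : 4 < p * d := by linarith [(div_lt_iff₀ hd0).mp hp]
  set θ := 4 / (p * d) with hθ
  have hθ0 : 0 < θ := by positivity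
  have hθ1 : θ < 1 := by rw [hθ, div_lt_one (by linarith)]; exact hpd
  have hexp : θ / (1 - θ) = 4 / (p * d - 4) := by
    have : p * d ≠ 0 := by positivity
    rw [hθ, one_sub_div this, div_div_div_cancel_right₀ this]
  rw [← hexp]
  set C := 4 / d * (1 - θ) * (2 / (4 / d * θ)) ^ (-(θ / (1 - θ)))
  refine ⟨C, ?_, ?_⟩
  · have : 0 < 1 - θ := by linarith
    positivity
  intro a ha w v _ _ hw hv hwd hineq t ht
  have hderiv : ∀ s, 0 ≤ s → deriv w s ≤ a ^ (-(θ / (1 - θ))) * C * w s :=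
    fun s hs ↦ by
      linarith [hineq s hs, mul_rpow_mul_rpow_one_sub_le_two_mul (by positivity : (0 : ℝ) < 4 / d)
        hθ0 hθ1 ha (hv s hs) (hw s hs)]
  convert le_mul_exp_of_deriv_le_mul hwd hderiv ht using 3
  ring
end

section
/- Let u : [0,T) → L²(ℝ^d) be continuous, let ρ_n → 0 be positive, x_n ∈ ℝ^d, t_n → T, and suppose ρ_n^{d/2} u(t_n, ρ_n · + x_n) ⇀ V weakly in L². Then liminf_{n→∞} sup_{y∈ℝ^d} ∫_{|x-y|≤1} |u(t_n,x)|² dx ≥ ∫ |V|² dx. -/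
open MeasureTheory Real Filter Set

open scoped ComplexConjugate

/-!
The rescaling `v_n = ρ_n^{d/2} u(t_n, ρ_n · + x_n)` preserves the `L²` norm and carries the
ball `B(0, A)` onto `B(x_n, ρ_n A)`, which lies in the unit ball `B(x_n, 1)` as soon as
`ρ_n A ≤ 1`. Testing the weak convergence against `1_{B(0,A)} V` and applying Cauchy–Schwarz
gives `(∫_{B(0,A)} |V|²)² ≤ ∫_{B(0,A)} |V|² · liminf_n ∫_{B(0,A)} |v_n|²`, so the mass of `V`
in every ball `B(0, A)` is bounded by the liminf of the local masses of `u(t_n)`; let `A → ∞`.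
The uniform bound on `‖v_n‖₂` given by Banach–Steinhaus is needed because the `liminf` of a
real sequence that is unbounded above is a junk value.
-/

section L2

variable {α 𝕜 : Type*} [MeasurableSpace α] {μ : Measure α} [RCLike 𝕜]

theorem integral_conj_mul_self (f : α → 𝕜) :
    ∫ x, conj (f x) * f x ∂μ = ((∫ x, ‖f x‖ ^ 2 ∂μ : ℝ) : 𝕜) := by
  rw [← integral_ofReal]
  simp_rw [RCLike.conj_mul, RCLike.ofReal_pow]

theorem MeasureTheory.MemLp.inner_toLp {f g : α → 𝕜} (hf : MemLp f 2 μ) (hg : MemLp g 2 μ) :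
    inner 𝕜 (hf.toLp f) (hg.toLp g) = ∫ x, conj (f x) * g x ∂μ := by
  refine integral_congr_ae ?_
  filter_upwards [hf.coeFn_toLp, hg.coeFn_toLp] with x hfx hgx
  rw [RCLike.inner_apply', hfx, hgx]

theorem MeasureTheory.MemLp.norm_toLp_sq {f : α → 𝕜} (hf : MemLp f 2 μ) :
    ‖hf.toLp f‖ ^ 2 = ∫ x, ‖f x‖ ^ 2 ∂μ := by
  rw [@norm_sq_eq_re_inner 𝕜, hf.inner_toLp hf, integral_conj_mul_self, RCLike.ofReal_re]

theorem norm_integral_conj_mul_sq_le {f g : α → 𝕜} (hf : MemLp f 2 μ) (hg : MemLp g 2 μ) :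
    ‖∫ x, conj (f x) * g x ∂μ‖ ^ 2 ≤ (∫ x, ‖f x‖ ^ 2 ∂μ) * ∫ x, ‖g x‖ ^ 2 ∂μ := by
  rw [← hf.inner_toLp hg, ← hf.norm_toLp_sq, ← hg.norm_toLp_sq, ← mul_pow]
  exact pow_le_pow_left₀ (norm_nonneg _) (norm_inner_le_norm _ _) 2

end L2

section Weak

variable {α ι 𝕜 : Type*} [MeasurableSpace α] {μ : Measure α} [RCLike 𝕜]

def TendstoWeaklyL2 (μ : Measure α) (l : Filter ι) (v : ι → α → 𝕜) (V : α → 𝕜) : Prop :=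
  ∀ g : α → 𝕜, MemLp g 2 μ →
    Tendsto (fun i => ∫ x, conj (g x) * v i x ∂μ) l (nhds (∫ x, conj (g x) * V x ∂μ))

theorem TendstoWeaklyL2.exists_integral_norm_sq_le {v : ℕ → α → 𝕜} {V : α → 𝕜}
    (h : TendstoWeaklyL2 μ atTop v V) (hv : ∀ n, MemLp (v n) 2 μ) :
    ∃ C, ∀ n, ∫ x, ‖v n x‖ ^ 2 ∂μ ≤ C := by
  have hbdd (G : Lp 𝕜 2 μ) : ∃ M, ∀ n, ‖innerSL 𝕜 ((hv n).toLp (v n)) G‖ ≤ M := by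
    obtain ⟨M, hM⟩ := (h G (Lp.memLp G)).norm.bddAbove_range
    refine ⟨M, fun n => ?_⟩
    rw [innerSL_apply_apply, norm_inner_symm, ← Lp.toLp_coeFn G (Lp.memLp G),
      MemLp.inner_toLp]
    exact hM (mem_range_self n)
  obtain ⟨C, hC⟩ := banach_steinhaus hbdd
  refine ⟨C ^ 2, fun n => ?_⟩
  rw [← (hv n).norm_toLp_sq]
  exact pow_le_pow_left₀ (norm_nonneg _) ((innerSL_apply_norm 𝕜 _).symm.trans_le (hC n)) 2

theorem integral_conj_indicator_mul {s : Set α} (hs : MeasurableSet s) (f g : α → 𝕜) :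
    ∫ x, conj (s.indicator f x) * g x ∂μ = ∫ x in s, conj (f x) * g x ∂μ := by
  rw [← integral_indicator hs]
  congr 1 with x
  by_cases hx : x ∈ s <;> simp [hx]

theorem TendstoWeaklyL2.setIntegral_norm_sq_le_liminf {l : Filter ι} [l.NeBot]
    {v : ι → α → 𝕜} {V : α → 𝕜} (h : TendstoWeaklyL2 μ l v V) (hV : MemLp V 2 μ)
    (hv : ∀ i, MemLp (v i) 2 μ) {s : Set α} (hs : MeasurableSet s) {S : ι → ℝ}
    (hS : IsCoboundedUnder (· ≥ ·) l S) (hvS : ∀ᶠ i in l, ∫ x in s, ‖v i x‖ ^ 2 ∂μ ≤ S i) :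
    ∫ x in s, ‖V x‖ ^ 2 ∂μ ≤ liminf S l := by
  set c := ∫ x in s, ‖V x‖ ^ 2 ∂μ
  have hc0 : 0 ≤ c := setIntegral_nonneg hs fun x _ => sq_nonneg ‖V x‖
  have hlim : Tendsto (fun i => ‖∫ x in s, conj (V x) * v i x ∂μ‖ ^ 2) l (nhds (c ^ 2)) := by
    have := (h _ (hV.indicator hs)).norm.pow 2
    simp_rw [integral_conj_indicator_mul hs, integral_conj_mul_self, RCLike.norm_ofReal] at this
    rwa [abs_of_nonneg hc0] at this
  have hCS : ∀ᶠ i in l, ‖∫ x in s, conj (V x) * v i x ∂μ‖ ^ 2 ≤ c * S i := by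
    filter_upwards [hvS] with i hi
    exact (norm_integral_conj_mul_sq_le (hV.restrict s) ((hv i).restrict s)).trans
      (mul_le_mul_of_nonneg_left hi hc0)
  obtain hc | hc := hc0.eq_or_lt
  · rw [show c = 0 from hc.symm]
    exact le_liminf_of_le hS
      (hvS.mono fun i hi => (setIntegral_nonneg hs fun x _ => sq_nonneg _).trans hi)
  · have hdiv := hlim.div_const c
    rw [sq, mul_div_cancel_right₀ _ hc.ne'] at hdiv
    calc c = liminf (fun i => ‖∫ x in s, conj (V x) * v i x ∂μ‖ ^ 2 / c) l := hdiv.liminf_eq.symm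
      _ ≤ liminf S l := liminf_le_liminf
          (hCS.mono fun i hi => (div_le_iff₀' hc).2 hi) hdiv.isBoundedUnder_ge hS

end Weak

section Rescale

open Module

variable {E 𝕜 : Type*} [NormedAddCommGroup E] [NormedSpace ℝ E] [RCLike 𝕜]

noncomputable def l2Rescale (r : ℝ) (c : E) (w : E → 𝕜) : E → 𝕜 :=
  fun x => ((r ^ ((finrank ℝ E : ℝ) / 2) : ℝ) : 𝕜) * w (r • x + c)

theorem norm_l2Rescale_sq {r : ℝ} (hr : 0 ≤ r) (c : E) (w : E → 𝕜) (x : E) :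
    ‖l2Rescale r c w x‖ ^ 2 = r ^ finrank ℝ E * ‖w (r • x + c)‖ ^ 2 := by
  rw [l2Rescale, norm_mul, mul_pow, RCLike.norm_ofReal, abs_of_nonneg (rpow_nonneg hr _),
    ← rpow_natCast, ← rpow_mul hr, ← rpow_natCast]
  norm_num

variable [MeasurableSpace E] [BorelSpace E] [FiniteDimensional ℝ E] {μ : Measure E}
  [μ.IsAddHaarMeasure]

theorem MeasureTheory.MemLp.comp_smul_add {F : Type*} [NormedAddCommGroup F] {p : ENNReal}
    {w : E → F} (hw : MemLp w p μ) {r : ℝ} (hr : r ≠ 0) (c : E) :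
    MemLp (fun x => w (r • x + c)) p μ :=
  ((hw.comp_measurePreserving (measurePreserving_add_right μ c)).smul_measure
    ENNReal.ofReal_ne_top).comp_measurePreserving
    ⟨measurable_const_smul r, Measure.map_addHaar_smul μ hr⟩

theorem MeasureTheory.MemLp.l2Rescale {w : E → 𝕜} (hw : MemLp w 2 μ) {r : ℝ} (hr : r ≠ 0)
    (c : E) : MemLp (l2Rescale r c w) 2 μ :=
  (hw.comp_smul_add hr c).const_mul _

theorem setIntegral_preimage_comp_smul_add {F : Type*} [NormedAddCommGroup F] [NormedSpace ℝ F]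
    {r : ℝ} (hr : 0 ≤ r) (c : E) (f : E → F) {t : Set E} (ht : MeasurableSet t) :
    ∫ x in (fun x => r • x + c) ⁻¹' t, f (r • x + c) ∂μ =
      (r ^ finrank ℝ E)⁻¹ • ∫ x in t, f x ∂μ := by
  have hmeas : Measurable fun x : E => r • x + c := (measurable_const_smul r).add_const c
  calc ∫ x in (fun x => r • x + c) ⁻¹' t, f (r • x + c) ∂μ
      = ∫ x, t.indicator f (r • x + c) ∂μ := by
        rw [← integral_indicator (hmeas ht)]
        rfl
    _ = (r ^ finrank ℝ E)⁻¹ • ∫ x, t.indicator f (x + c) ∂μ :=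
        Measure.integral_comp_smul_of_nonneg μ (fun y => t.indicator f (y + c)) r (hR := hr)
    _ = (r ^ finrank ℝ E)⁻¹ • ∫ x in t, f x ∂μ := by
        rw [integral_add_right_eq_self, integral_indicator ht]

theorem setIntegral_preimage_norm_l2Rescale_sq {r : ℝ} (hr : 0 < r) (c : E) (w : E → 𝕜)
    {t : Set E} (ht : MeasurableSet t) :
    ∫ x in (fun x => r • x + c) ⁻¹' t, ‖l2Rescale r c w x‖ ^ 2 ∂μ = ∫ x in t, ‖w x‖ ^ 2 ∂μ := by
  simp_rw [norm_l2Rescale_sq hr.le, integral_const_mul,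
    setIntegral_preimage_comp_smul_add hr.le c (fun y => ‖w y‖ ^ 2) ht, smul_eq_mul,
    mul_inv_cancel_left₀ (pow_pos hr _).ne']

theorem integral_norm_l2Rescale_sq {r : ℝ} (hr : 0 < r) (c : E) (w : E → 𝕜) :
    ∫ x, ‖l2Rescale r c w x‖ ^ 2 ∂μ = ∫ x, ‖w x‖ ^ 2 ∂μ := by
  simpa using setIntegral_preimage_norm_l2Rescale_sq (μ := μ) hr c w MeasurableSet.univ

theorem setIntegral_closedBall_norm_l2Rescale_sq {r : ℝ} (hr : 0 < r) (c : E) (w : E → 𝕜)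
    (A : ℝ) :
    ∫ x in Metric.closedBall 0 A, ‖l2Rescale r c w x‖ ^ 2 ∂μ =
      ∫ x in Metric.closedBall c (r * A), ‖w x‖ ^ 2 ∂μ := by
  have hpre : (fun x => r • x + c) ⁻¹' Metric.closedBall c (r * A) = Metric.closedBall 0 A := by
    ext x
    simp [dist_eq_norm, norm_smul, abs_of_pos hr, mul_le_mul_iff_right₀ hr]
  rw [← hpre, setIntegral_preimage_norm_l2Rescale_sq hr c w measurableSet_closedBall]

end Rescale

section SetIntegral

variable {α ι : Type*} [MeasurableSpace α] {μ : Measure α} {f : α → ℝ}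

theorem setIntegral_le_iSup_setIntegral (hf : Integrable f μ) (hf0 : 0 ≤ f) (s : ι → Set α)
    (i : ι) : ∫ x in s i, f x ∂μ ≤ ⨆ j, ∫ x in s j, f x ∂μ :=
  le_ciSup ⟨∫ x, f x ∂μ, forall_mem_range.2 fun _ =>
    setIntegral_le_integral hf (Eventually.of_forall hf0)⟩ i

theorem iSup_setIntegral_le_integral (hf : Integrable f μ) (hf0 : 0 ≤ f) (s : ι → Set α) :
    ⨆ j, ∫ x in s j, f x ∂μ ≤ ∫ x, f x ∂μ :=
  Real.iSup_le (fun _ => setIntegral_le_integral hf (Eventually.of_forall hf0))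
    (integral_nonneg hf0)

theorem integral_le_of_forall_setIntegral_closedBall_le [PseudoMetricSpace α]
    [OpensMeasurableSpace α] (hf : Integrable f μ) (x₀ : α) {L : ℝ}
    (h : ∀ n : ℕ, ∫ x in Metric.closedBall x₀ n, f x ∂μ ≤ L) : ∫ x, f x ∂μ ≤ L := by
  have hlim := tendsto_setIntegral_of_monotone (s := fun n : ℕ => Metric.closedBall x₀ n)
    (fun _ => measurableSet_closedBall)
    (fun _ _ hij => Metric.closedBall_subset_closedBall (Nat.cast_le.2 hij)) hf.integrableOn
  rw [Metric.iUnion_closedBall_nat, Measure.restrict_univ] at hlim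
  exact le_of_tendsto' hlim h

end SetIntegral

theorem stmt16_general (d : ℕ)
    (u : ℝ → EuclideanSpace ℝ (Fin d) → ℂ)
    (hu : ∀ t, MemLp (u t) 2 (volume : Measure (EuclideanSpace ℝ (Fin d))))
    (ρ : ℕ → ℝ) (hρpos : ∀ n, 0 < ρ n) (hρ : Filter.Tendsto ρ atTop (nhds 0))
    (xc : ℕ → EuclideanSpace ℝ (Fin d))
    (tseq : ℕ → ℝ)
    (V : EuclideanSpace ℝ (Fin d) → ℂ)
    (hV : MemLp V 2 (volume : Measure (EuclideanSpace ℝ (Fin d))))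
    (hweak : ∀ g : EuclideanSpace ℝ (Fin d) → ℂ,
      MemLp g 2 (volume : Measure (EuclideanSpace ℝ (Fin d))) →
      Filter.Tendsto
        (fun n => ∫ x, starRingEnd ℂ (g x)
          * (((ρ n ^ ((d : ℝ) / 2) : ℝ) : ℂ) * u (tseq n) (ρ n • x + xc n)))
        atTop (nhds (∫ x, starRingEnd ℂ (g x) * V x))) :
    (∫ x, ‖V x‖ ^ (2 : ℝ)) ≤
      Filter.liminf
        (fun n => ⨆ y : EuclideanSpace ℝ (Fin d),
          ∫ x in Metric.closedBall y 1, ‖u (tseq n) x‖ ^ (2 : ℝ)) atTop := by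
  simp only [Real.rpow_two]
  set S := fun n => ⨆ y, ∫ x in Metric.closedBall y 1, ‖u (tseq n) x‖ ^ 2
  set v := fun n => l2Rescale (ρ n) (xc n) (u (tseq n))
  have hv n : MemLp (v n) 2 volume := (hu _).l2Rescale (hρpos n).ne' _
  have hvV : TendstoWeaklyL2 volume atTop v V := by
    simp only [TendstoWeaklyL2, v, l2Rescale, finrank_euclideanSpace_fin]
    exact hweak
  have hu2 t : Integrable (fun x => ‖u t x‖ ^ 2) volume := (hu t).integrable_norm_pow two_ne_zero
  obtain ⟨C, hC⟩ := hvV.exists_integral_norm_sq_le hv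
  have hS : IsCoboundedUnder (· ≥ ·) atTop S := isCoboundedUnder_ge_of_le atTop fun n =>
    calc S n ≤ ∫ x, ‖u (tseq n) x‖ ^ 2 :=
          iSup_setIntegral_le_integral (hu2 _) (fun _ => sq_nonneg _) _
      _ = ∫ x, ‖v n x‖ ^ 2 := (integral_norm_l2Rescale_sq (hρpos n) _ _).symm
      _ ≤ C := hC n
  refine integral_le_of_forall_setIntegral_closedBall_le (hV.integrable_norm_pow two_ne_zero) 0
    fun A => hvV.setIntegral_norm_sq_le_liminf hV hv measurableSet_closedBall hS ?_
  filter_upwards [(hρ.mul_const (A : ℝ)).eventually_le_const (show 0 * (A : ℝ) < 1 by simp)]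
    with n hn
  calc ∫ x in Metric.closedBall 0 A, ‖v n x‖ ^ 2
      = ∫ x in Metric.closedBall (xc n) (ρ n * A), ‖u (tseq n) x‖ ^ 2 :=
        setIntegral_closedBall_norm_l2Rescale_sq (hρpos n) _ _ _
    _ ≤ ∫ x in Metric.closedBall (xc n) 1, ‖u (tseq n) x‖ ^ 2 :=
        setIntegral_mono_set (hu2 _).integrableOn (Eventually.of_forall fun _ => sq_nonneg _)
          (Metric.closedBall_subset_closedBall hn).eventuallyLE
    _ ≤ S n :=
        setIntegral_le_iSup_setIntegral (hu2 _) (fun _ => sq_nonneg _) (Metric.closedBall · 1) _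

/-- Localization lemma for weak limits under L²-invariant rescalings:
if ρ_n^{d/2} u(t_n, ρ_n·+x_n) ⇀ V weakly in L² with ρ_n → 0, then
liminf_n sup_y ∫_{|x-y|≤1}|u(t_n,x)|²dx ≥ ∫|V|². -/
theorem stmt16 (d : ℕ) (hd : 1 ≤ d) (T : ℝ)
    (u : ℝ → EuclideanSpace ℝ (Fin d) → ℂ)
    (hu : ∀ t, MemLp (u t) 2 (volume : Measure (EuclideanSpace ℝ (Fin d))))
    (ρ : ℕ → ℝ) (hρpos : ∀ n, 0 < ρ n) (hρ : Filter.Tendsto ρ atTop (nhds 0))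
    (xc : ℕ → EuclideanSpace ℝ (Fin d))
    (tseq : ℕ → ℝ) (ht : Filter.Tendsto tseq atTop (nhds T))
    (V : EuclideanSpace ℝ (Fin d) → ℂ)
    (hV : MemLp V 2 (volume : Measure (EuclideanSpace ℝ (Fin d))))
    (hweak : ∀ g : EuclideanSpace ℝ (Fin d) → ℂ,
      MemLp g 2 (volume : Measure (EuclideanSpace ℝ (Fin d))) →
      Filter.Tendsto
        (fun n => ∫ x, starRingEnd ℂ (g x)
          * (((ρ n ^ ((d : ℝ) / 2) : ℝ) : ℂ) * u (tseq n) (ρ n • x + xc n)))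
        atTop (nhds (∫ x, starRingEnd ℂ (g x) * V x))) :
    (∫ x, ‖V x‖ ^ (2 : ℝ)) ≤
      Filter.liminf
        (fun n => ⨆ y : EuclideanSpace ℝ (Fin d),
          ∫ x in Metric.closedBall y 1, ‖u (tseq n) x‖ ^ (2 : ℝ)) atTop :=
  stmt16_general d u hu ρ hρpos hρ xc tseq V hV hweak
end

section
/- Let λ : [0,T] → (0,∞) satisfy the log-log regime controls: λ(t_k) = 2^{-k} for k₀ ≤ k ≤ k₊, t_{k+1} - t_k ≤ k λ²(t_k), and suppose on each subinterval of length ~λ²(t_k) within [t_k, t_{k+1}] the energy increment is at most C λ^{-2-pd/2}(t_k) times the subinterval length, with 1 ≤ p < 4/d. Then the total energy increment over [0,T] satisfies |E(u(T)) - E(u(0))| ≤ C k₊ λ^{-pd/2}(T) ≲ |log λ(T)| λ(T)^{-pd/2}, which is o(λ(T)^{-2}) as λ(T) → 0. -/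
/-!
On the `k`-th dyadic interval the local bound, applied to a partition into pieces of length at
most `λ(t_k)²`, gives an increment `C (t_{k+1} - t_k) λ(t_k)^{-2-a}` with `a = pd/2`, and the
doubling-time control turns this into `C k λ(t_k)^{-a} = C k r^k` with `r = 2^a > 1`. Summed over
`k₀ ≤ k < k₊`, this geometric series is dominated by its last term, giving `C k₊ r^{k₊} / (r - 1)`,
where `r^{k₊} = λ(T)^{-a}` and `k₊ log 2 = |log λ(T)|`.
-/

open Real

open Finset in
theorem abs_sub_le_mul_of_local_bound {f : ℝ → ℝ} {a b δ M : ℝ} (hab : a ≤ b) (hδ : 0 < δ)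
    (hloc : ∀ s₁ s₂, a ≤ s₁ → s₁ ≤ s₂ → s₂ ≤ b → s₂ - s₁ ≤ δ →
      |f s₂ - f s₁| ≤ M * (s₂ - s₁)) :
    |f b - f a| ≤ M * (b - a) := by
  set n : ℕ := ⌈(b - a) / δ⌉₊ + 1
  have hn : (0 : ℝ) < n := by positivity
  set h := (b - a) / n
  have hh : 0 ≤ h := div_nonneg (sub_nonneg.2 hab) hn.le
  have hhδ : h ≤ δ := by
    have hceil : (b - a) / δ ≤ ⌈(b - a) / δ⌉₊ := Nat.le_ceil _
    rw [div_le_iff₀ hδ] at hceil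
    rw [div_le_iff₀ hn]
    push_cast [n]
    nlinarith
  have hnh : n * h = b - a := mul_div_cancel₀ _ hn.ne'
  let g : ℕ → ℝ := fun j => f (a + j * h)
  calc |f b - f a| = dist (g 0) (g n) := by
        simp [g, Real.dist_eq, hnh, abs_sub_comm]
    _ ≤ ∑ j ∈ range n, dist (g j) (g (j + 1)) := dist_le_range_sum_dist g n
    _ ≤ ∑ _j ∈ range n, M * h := sum_le_sum fun j hj => ?_
    _ = M * (b - a) := by rw [sum_const, card_range, nsmul_eq_mul, ← hnh]; ring
  have hj : (j : ℝ) + 1 ≤ n := by exact_mod_cast mem_range.1 hj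
  have hpiece := hloc (a + j * h) (a + (j + 1) * h) (by nlinarith) (by nlinarith) (by nlinarith)
    (by linarith)
  simp only [g, Real.dist_eq, Nat.cast_succ]
  rw [abs_sub_comm]
  exact hpiece.trans_eq (by ring)

theorem abs_sub_le_of_doubling_time_le {f : ℝ → ℝ} {t₀ t₁ lam k C a : ℝ} (hC : 0 ≤ C)
    (hlam : 0 < lam) (ht : t₀ ≤ t₁) (hdouble : t₁ - t₀ ≤ k * lam ^ 2)
    (hloc : ∀ s₁ s₂, t₀ ≤ s₁ → s₁ ≤ s₂ → s₂ ≤ t₁ → s₂ - s₁ ≤ lam ^ 2 →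
      |f s₂ - f s₁| ≤ C * (s₂ - s₁) * lam ^ (-2 - a)) :
    |f t₁ - f t₀| ≤ C * k * lam ^ (-a) := by
  have hscale : lam ^ 2 * lam ^ (-2 - a) = lam ^ (-a) := by
    rw [← Real.rpow_natCast, ← Real.rpow_add hlam]; ring_nf
  calc |f t₁ - f t₀| ≤ C * lam ^ (-2 - a) * (t₁ - t₀) :=
        abs_sub_le_mul_of_local_bound ht (by positivity) fun s₁ s₂ h₁ h₁₂ h₂ hlen =>
          (hloc s₁ s₂ h₁ h₁₂ h₂ hlen).trans_eq (by ring)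
    _ ≤ C * lam ^ (-2 - a) * (k * lam ^ 2) := by gcongr
    _ = C * k * lam ^ (-a) := by rw [← hscale]; ring

open Finset in
theorem abs_sub_le_of_abs_sub_succ_le_geom {g : ℕ → ℝ} {m n : ℕ} {r B : ℝ} (hr : 1 < r)
    (hB : 0 ≤ B) (hmn : m ≤ n) (hstep : ∀ k, m ≤ k → k < n → |g (k + 1) - g k| ≤ B * r ^ k) :
    |g n - g m| ≤ B * r ^ n / (r - 1) := by
  have hr1 : 0 < r - 1 := sub_pos.2 hr
  calc |g n - g m| = dist (g m) (g n) := by rw [Real.dist_eq, abs_sub_comm]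
    _ ≤ ∑ k ∈ Ico m n, dist (g k) (g (k + 1)) := dist_le_Ico_sum_dist g hmn
    _ ≤ ∑ k ∈ Ico m n, B * r ^ k := sum_le_sum fun k hk => by
        rw [Real.dist_eq, abs_sub_comm]
        exact hstep k (mem_Ico.1 hk).1 (mem_Ico.1 hk).2
    _ = B * ((r ^ n - r ^ m) / (r - 1)) := by rw [← mul_sum, geom_sum_Ico hr.ne' hmn]
    _ ≤ B * r ^ n / (r - 1) := by
        rw [mul_div_assoc]
        gcongr
        linarith [pow_pos (zero_lt_one.trans hr) m]

theorem two_rpow_neg_natCast_rpow_neg (k : ℕ) (a : ℝ) :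
    ((2 : ℝ) ^ (-(k : ℝ))) ^ (-a) = ((2 : ℝ) ^ a) ^ k := by
  rw [← Real.rpow_mul zero_le_two, ← Real.rpow_natCast, ← Real.rpow_mul zero_le_two]
  ring_nf

theorem stmt19_general (d : ℕ) (hd : 1 ≤ d) (p C : ℝ) (hp1 : 1 ≤ p)
    (hC : 0 < C) :
    ∃ C' : ℝ, 0 < C' ∧
      ∀ (T : ℝ) (lam : ℝ → ℝ) (k₀ kp : ℕ) (t : ℕ → ℝ) (Ef : ℝ → ℝ),
        0 < T →
        (∀ s ∈ Set.Icc (0 : ℝ) T, 0 < lam s) →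
        1 ≤ k₀ → k₀ ≤ kp →
        t k₀ = 0 → t kp = T →
        (∀ k, k₀ ≤ k → k < kp → t k < t (k + 1)) →
        (∀ k, k₀ ≤ k → k ≤ kp → t k ∈ Set.Icc (0 : ℝ) T) →
        -- dyadic values of the scaling parameter:
        (∀ k, k₀ ≤ k → k ≤ kp → lam (t k) = (2 : ℝ) ^ (-(k : ℝ))) →
        -- control of the doubling time interval:
        (∀ k, k₀ ≤ k → k < kp → t (k + 1) - t k ≤ (k : ℝ) * lam (t k) ^ (2 : ℕ)) →
        -- local energy increment on subintervals of length ≤ λ²(t_k):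
        (∀ k, k₀ ≤ k → k < kp → ∀ s₁ s₂ : ℝ, t k ≤ s₁ → s₁ ≤ s₂ → s₂ ≤ t (k + 1) →
          s₂ - s₁ ≤ lam (t k) ^ (2 : ℕ) →
          |Ef s₂ - Ef s₁| ≤ C * (s₂ - s₁) * lam (t k) ^ (-(2 : ℝ) - p * (d : ℝ) / 2)) →
        |Ef T - Ef 0| ≤ C' * (kp : ℝ) * lam T ^ (-(p * (d : ℝ) / 2)) ∧
          |Ef T - Ef 0| ≤ C' * |Real.log (lam T)| * lam T ^ (-(p * (d : ℝ) / 2)) := by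
  set a := p * (d : ℝ) / 2
  set r : ℝ := 2 ^ a with hr_def
  have ha : 0 < a := by
    have : (0 : ℝ) < d := by exact_mod_cast hd
    exact div_pos (mul_pos (by linarith) this) two_pos
  have hr : 1 < r := Real.one_lt_rpow one_lt_two ha
  refine ⟨C / ((r - 1) * log 2), by have := sub_pos.2 hr; positivity, ?_⟩
  intro T lam k₀ kp t Ef _ _ _ hk₀kp ht0 htT hmono _ hdyadic hdouble hloc
  have hlamT : lam T = 2 ^ (-(kp : ℝ)) := htT ▸ hdyadic kp hk₀kp le_rfl
  have hsum : |Ef T - Ef 0| ≤ C * kp * r ^ kp / (r - 1) := by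
    rw [← ht0, ← htT]
    refine abs_sub_le_of_abs_sub_succ_le_geom (g := Ef ∘ t) hr (by positivity) hk₀kp
      fun k hk hkp => ?_
    have hlamk := hdyadic k hk hkp.le
    calc |Ef (t (k + 1)) - Ef (t k)| ≤ C * k * lam (t k) ^ (-a) :=
          abs_sub_le_of_doubling_time_le hC.le (by rw [hlamk]; positivity) (hmono k hk hkp).le
            (hdouble k hk hkp) (hloc k hk hkp)
      _ ≤ C * kp * r ^ k := by
          rw [hlamk, two_rpow_neg_natCast_rpow_neg]; gcongr
  have hlog : |log (lam T)| = kp * log 2 := by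
    rw [hlamT, Real.log_rpow two_pos, abs_mul, abs_neg, Nat.abs_cast,
      abs_of_pos (Real.log_pos one_lt_two)]
  have hbound : C * kp * r ^ kp / (r - 1) = C / ((r - 1) * log 2) * (kp * log 2) * r ^ kp := by
    have := sub_pos.2 hr
    field_simp
  rw [hlog, hlamT, two_rpow_neg_natCast_rpow_neg, ← hr_def]
  refine ⟨hsum.trans (hbound.trans_le ?_), hsum.trans_eq hbound⟩
  gcongr
  exact mul_le_of_le_one_right (Nat.cast_nonneg _) (log_two_lt_d9.le.trans (by norm_num))

/-- Bookkeeping estimate for the energy growth in the log-log regime: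
with dyadic times λ(t_k) = 2^{-k}, doubling-time control t_{k+1}-t_k ≤ kλ²(t_k),
and local energy increments ≤ C·(length)·λ^{-2-pd/2}(t_k) on subintervals of
length ≤ λ²(t_k), the total increment satisfies
|E(T)-E(0)| ≤ C' k₊ λ(T)^{-pd/2} ≲ |log λ(T)| λ(T)^{-pd/2}. -/
theorem stmt19 (d : ℕ) (hd : 1 ≤ d) (p C : ℝ) (hp1 : 1 ≤ p) (hp2 : p < 4 / (d : ℝ))
    (hC : 0 < C) :
    ∃ C' : ℝ, 0 < C' ∧
      ∀ (T : ℝ) (lam : ℝ → ℝ) (k₀ kp : ℕ) (t : ℕ → ℝ) (Ef : ℝ → ℝ),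
        0 < T →
        (∀ s ∈ Set.Icc (0 : ℝ) T, 0 < lam s) →
        1 ≤ k₀ → k₀ ≤ kp →
        t k₀ = 0 → t kp = T →
        (∀ k, k₀ ≤ k → k < kp → t k < t (k + 1)) →
        (∀ k, k₀ ≤ k → k ≤ kp → t k ∈ Set.Icc (0 : ℝ) T) →
        -- dyadic values of the scaling parameter:
        (∀ k, k₀ ≤ k → k ≤ kp → lam (t k) = (2 : ℝ) ^ (-(k : ℝ))) →
        -- control of the doubling time interval:
        (∀ k, k₀ ≤ k → k < kp → t (k + 1) - t k ≤ (k : ℝ) * lam (t k) ^ (2 : ℕ)) →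
        -- local energy increment on subintervals of length ≤ λ²(t_k):
        (∀ k, k₀ ≤ k → k < kp → ∀ s₁ s₂ : ℝ, t k ≤ s₁ → s₁ ≤ s₂ → s₂ ≤ t (k + 1) →
          s₂ - s₁ ≤ lam (t k) ^ (2 : ℕ) →
          |Ef s₂ - Ef s₁| ≤ C * (s₂ - s₁) * lam (t k) ^ (-(2 : ℝ) - p * (d : ℝ) / 2)) →
        |Ef T - Ef 0| ≤ C' * (kp : ℝ) * lam T ^ (-(p * (d : ℝ) / 2)) ∧
          |Ef T - Ef 0| ≤ C' * |Real.log (lam T)| * lam T ^ (-(p * (d : ℝ) / 2)) :=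
  stmt19_general d hd p C hp1 hC
end
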